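/- Along any gradient flow Θ(s) of the total PINN loss L, the concatenated residual vector V(s) = (r_1(Θ(s)),…,r_{N_r}(Θ(s)), b_1(Θ(s)),…,b_{N_b}(Θ(s)), z_1(Θ(s)),…,z_{N_z}(Θ(s))) satisfies the linear evolution dV/ds = −K(s) V(s), where K(s) is the (N_r+N_b+N_z)×(N_r+N_b+N_z) matrix whose entry in row indexed by residual ρ_i from group c and column indexed by residual ρ'_j from group c' equals (2λ_{c'}/N_{c'}) · ⟨∇ρ_i(Θ(s)), ∇ρ'_j(Θ(s))⟩. -/

import Mathlib

open scoped RealInnerProductSpace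

/-!
The loss is a weighted sum of squares `L = ∑ⱼ cⱼ ρⱼ²` of the concatenated residuals, so
`∇L = ∑ⱼ 2 cⱼ ρⱼ ∇ρⱼ`. By the chain rule, along the flow `Θ' = -∇L` each residual evolves by
`(ρᵢ ∘ Θ)' = ⟪∇ρᵢ, Θ'⟫ = -∑ⱼ 2 cⱼ ⟪∇ρᵢ, ∇ρⱼ⟫ ρⱼ`, which is the `i`-th row of `-K V`.
-/

section Gradient

variable {E : Type*} [NormedAddCommGroup E] [InnerProductSpace ℝ E] [CompleteSpace E]

theorem HasGradientAt.comp_hasDerivAt {f : E → ℝ} {g : E} {γ : ℝ → E} {γ' : E} {t : ℝ}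
    (hf : HasGradientAt f g (γ t)) (hγ : HasDerivAt γ γ' t) :
    HasDerivAt (fun s => f (γ s)) ⟪g, γ'⟫ t := by
  have h := (hasGradientAt_iff_hasFDerivAt.mp hf).comp_hasDerivAt t hγ
  rwa [InnerProductSpace.toDual_apply_apply] at h

theorem hasGradientAt_sum_mul_sq {ι : Type*} [Fintype ι] (c : ι → ℝ) {f : ι → E → ℝ} {x : E}
    (hf : ∀ j, DifferentiableAt ℝ (f j) x) :
    HasGradientAt (fun y => ∑ j, c j * f j y ^ 2)
      (∑ j, (2 * c j * f j x) • gradient (f j) x) x := by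
  rw [hasGradientAt_iff_hasFDerivAt]
  have hterm : ∀ j, HasFDerivAt (fun y => c j * f j y ^ 2)
      ((2 * c j * f j x) • InnerProductSpace.toDual ℝ E (gradient (f j) x)) x := by
    intro j
    have hsq := (hasGradientAt_iff_hasFDerivAt.mp (hf j).hasGradientAt).pow 2
    refine (hsq.const_mul (c j)).congr_fderiv ?_
    rw [smul_smul, nsmul_eq_mul]
    congr 1
    ring
  simpa only [map_sum, map_smul] using HasFDerivAt.fun_sum (u := Finset.univ) fun j _ => hterm j

end Gradient

theorem pinn_residual_vector_ntk_dynamics_general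
    (p Nr Nb Nz : ℕ)
    (r : Fin Nr → EuclideanSpace ℝ (Fin p) → ℝ)
    (b : Fin Nb → EuclideanSpace ℝ (Fin p) → ℝ)
    (z : Fin Nz → EuclideanSpace ℝ (Fin p) → ℝ)
    (hr : ∀ i, ContDiff ℝ 1 (r i)) (hb : ∀ i, ContDiff ℝ 1 (b i))
    (hz : ∀ i, ContDiff ℝ 1 (z i))
    (lr lb lz : ℝ)
    (L : EuclideanSpace ℝ (Fin p) → ℝ)
    (hL : L = fun Θ => lr / (Nr : ℝ) * ∑ i, (r i Θ) ^ 2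
        + lb / (Nb : ℝ) * ∑ i, (b i Θ) ^ 2 + lz / (Nz : ℝ) * ∑ i, (z i Θ) ^ 2)
    (Θ : ℝ → EuclideanSpace ℝ (Fin p))
    (hΘ : ∀ s : ℝ, HasDerivAt Θ (-gradient L (Θ s)) s)
    -- the concatenated residual functions
    (ρ : (Fin Nr ⊕ Fin Nb ⊕ Fin Nz) → EuclideanSpace ℝ (Fin p) → ℝ)
    (hρ : ρ = Sum.elim r (Sum.elim b z))
    -- the group coefficients `λ_c / N_c`
    (c : (Fin Nr ⊕ Fin Nb ⊕ Fin Nz) → ℝ)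
    (hc : c = Sum.elim (fun _ => lr / (Nr : ℝ))
        (Sum.elim (fun _ => lb / (Nb : ℝ)) (fun _ => lz / (Nz : ℝ))))
    -- the neural tangent kernel matrix
    (K : ℝ → Matrix (Fin Nr ⊕ Fin Nb ⊕ Fin Nz) (Fin Nr ⊕ Fin Nb ⊕ Fin Nz) ℝ)
    (hK : ∀ s i j, K s i j = 2 * c j * ⟪gradient (ρ i) (Θ s), gradient (ρ j) (Θ s)⟫)
    (i : Fin Nr ⊕ Fin Nb ⊕ Fin Nz) (s : ℝ) :
    HasDerivAt (fun t => ρ i (Θ t)) (-∑ j, K s i j * ρ j (Θ s)) s := by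
  have hdiff : ∀ j, Differentiable ℝ (ρ j) := by
    rintro (j | j | j) <;> simp only [hρ, Sum.elim_inl, Sum.elim_inr]
    exacts [(hr j).differentiable one_ne_zero, (hb j).differentiable one_ne_zero,
      (hz j).differentiable one_ne_zero]
  have hL_sum : L = fun y => ∑ j, c j * ρ j y ^ 2 := by
    simp only [hL, hρ, hc, Fintype.sum_sum_type, Sum.elim_inl, Sum.elim_inr, Finset.mul_sum,
      add_assoc]
  have hgradL : gradient L (Θ s) = ∑ j, (2 * c j * ρ j (Θ s)) • gradient (ρ j) (Θ s) := by
    rw [hL_sum]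
    exact (hasGradientAt_sum_mul_sq c fun j => hdiff j _).gradient
  convert ((hdiff i _).hasGradientAt).comp_hasDerivAt (hΘ s) using 1
  simp only [hgradL, inner_neg_right, inner_sum, real_inner_smul_right, hK]
  congr 1
  exact Finset.sum_congr rfl fun j _ => by ring

/-- Along any gradient flow `Θ(s)` of the total PINN loss
`L = (λr/Nr) ∑ rᵢ² + (λb/Nb) ∑ bᵢ² + (λz/Nz) ∑ zᵢ²`, the concatenated residual
vector `V(s) = (r, b, z)(Θ(s))` satisfies `dV/ds = -K(s) V(s)`, where the entry
of `K(s)` in row `i` (from group `c`) and column `j` (from group `c'`) is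
`(2 λ_{c'}/N_{c'}) ⟪∇ρᵢ(Θ(s)), ∇ρ'ⱼ(Θ(s))⟫`. -/
theorem pinn_residual_vector_ntk_dynamics
    (p Nr Nb Nz : ℕ)
    (r : Fin Nr → EuclideanSpace ℝ (Fin p) → ℝ)
    (b : Fin Nb → EuclideanSpace ℝ (Fin p) → ℝ)
    (z : Fin Nz → EuclideanSpace ℝ (Fin p) → ℝ)
    (hr : ∀ i, ContDiff ℝ 1 (r i)) (hb : ∀ i, ContDiff ℝ 1 (b i))
    (hz : ∀ i, ContDiff ℝ 1 (z i))
    (lr lb lz : ℝ) (hlr : 0 < lr) (hlb : 0 < lb) (hlz : 0 < lz)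
    (L : EuclideanSpace ℝ (Fin p) → ℝ)
    (hL : L = fun Θ => lr / (Nr : ℝ) * ∑ i, (r i Θ) ^ 2
        + lb / (Nb : ℝ) * ∑ i, (b i Θ) ^ 2 + lz / (Nz : ℝ) * ∑ i, (z i Θ) ^ 2)
    (Θ : ℝ → EuclideanSpace ℝ (Fin p))
    (hΘ : ∀ s : ℝ, HasDerivAt Θ (-gradient L (Θ s)) s)
    -- the concatenated residual functions
    (ρ : (Fin Nr ⊕ Fin Nb ⊕ Fin Nz) → EuclideanSpace ℝ (Fin p) → ℝ)
    (hρ : ρ = Sum.elim r (Sum.elim b z))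
    -- the group coefficients `λ_c / N_c`
    (c : (Fin Nr ⊕ Fin Nb ⊕ Fin Nz) → ℝ)
    (hc : c = Sum.elim (fun _ => lr / (Nr : ℝ))
        (Sum.elim (fun _ => lb / (Nb : ℝ)) (fun _ => lz / (Nz : ℝ))))
    -- the neural tangent kernel matrix
    (K : ℝ → Matrix (Fin Nr ⊕ Fin Nb ⊕ Fin Nz) (Fin Nr ⊕ Fin Nb ⊕ Fin Nz) ℝ)
    (hK : ∀ s i j, K s i j = 2 * c j * ⟪gradient (ρ i) (Θ s), gradient (ρ j) (Θ s)⟫)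
    (i : Fin Nr ⊕ Fin Nb ⊕ Fin Nz) (s : ℝ) :
    HasDerivAt (fun t => ρ i (Θ t)) (-∑ j, K s i j * ρ j (Θ s)) s :=
  pinn_residual_vector_ntk_dynamics_general p Nr Nb Nz r b z hr hb hz lr lb lz L hL Θ hΘ ρ hρ c hc K
    hK i s
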